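/- arXiv:1810.07499 — 2 statements merged into one kernel-verified Lean document; each statement's English description precedes it below -/
import Mathlib

section
/- Let v, w : ℝ^N → ℝ be bounded C² functions with bounded first and second derivatives. Then for every x ∈ ℝ^N all the integrals below converge absolutely and 𝓛(vw)(x) = v(x) 𝓛w(x) + w(x) 𝓛v(x) − E(v,w)(x), where E(v,w)(x) = ½ ∫_{𝕊^{N−1}} ∫_0^∞ [ (v(x+rθ) − v(x))(w(x+rθ) − w(x)) + (v(x) − v(x−rθ))(w(x) − w(x−rθ)) ] r^{−1−σ} dr dμ(θ). -/
open MeasureTheory Metric Real Set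
open scoped InnerProductSpace ENNReal

noncomputable section

/-- `ℝ^N` as a Euclidean space. -/
abbrev Eu (N : ℕ) := EuclideanSpace ℝ (Fin N)

/-- The unit sphere `𝕊^{N-1} ⊂ ℝ^N`. -/
abbrev Sph (N : ℕ) := Metric.sphere (0 : Eu N) 1

/-- The surface measure `dθ` on the unit sphere. -/
def sphMeas (N : ℕ) : Measure (Sph N) := (volume : Measure (Eu N)).toSphere

/-- The stable operator `𝓛` associated to the order `σ` and the spectral measure `μ`:
`𝓛u(x) = ∫_{𝕊^{N−1}} ∫_0^∞ (u(x) − (u(x+rθ)+u(x−rθ))/2) r^{−1−σ} dr dμ(θ)`. -/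
def Lop (N : ℕ) (σ : ℝ) (μ : Measure (Sph N)) (u : Eu N → ℝ) (x : Eu N) : ℝ :=
  ∫ θ : Sph N, (∫ r in Ioi (0 : ℝ),
    (u x - (u (x + r • (θ : Eu N)) + u (x - r • (θ : Eu N))) / 2) * r ^ (-1 - σ)) ∂μ

/-- The ellipticity (non-degeneracy) condition on the spectral measure. -/
def Elliptic (N : ℕ) (σ : ℝ) (μ : Measure (Sph N)) (lam : ℝ) : Prop :=
  ∀ ζ : Sph N, lam ≤ ∫ θ : Sph N, |⟪(ζ : Eu N), (θ : Eu N)⟫_ℝ| ^ σ ∂μ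

/-- The weight `ρ(x) = (1+|x|)^{−(N+σ)}`. -/
def wt (N : ℕ) (σ : ℝ) (x : Eu N) : ℝ := (1 + ‖x‖) ^ (-((N : ℝ) + σ))

/-- `u ∈ L¹_loc([0,∞); L_ρ)`. -/
def L1locRho (N : ℕ) (σ : ℝ) (u : Eu N → ℝ → ℝ) : Prop :=
  ∀ T > 0, IntegrableOn (fun q : Eu N × ℝ => u q.1 q.2 * wt N σ q.1)
    ((univ : Set (Eu N)) ×ˢ Ioo (0 : ℝ) T) volume

/-- Very weak solution of `∂ₜu + 𝓛u = 𝓛f` in `Q = ℝ^N × (0,∞)` with initial datum `u₀`: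
`∫_Q u ∂ₜζ + ∫ u₀ ζ(·,0) = ∫_Q (u−f) 𝓛ζ` for all `ζ ∈ C_c^∞(ℝ^N × [0,∞))`. -/
def IsVeryWeakSol (N : ℕ) (σ : ℝ) (μ : Measure (Sph N)) (f : Eu N → ℝ → ℝ)
    (u0 : Eu N → ℝ) (u : Eu N → ℝ → ℝ) : Prop :=
  L1locRho N σ u ∧
  ∀ ζ : Eu N × ℝ → ℝ, ContDiff ℝ (⊤ : ℕ∞) ζ → HasCompactSupport ζ →
    (∫ q : Eu N × ℝ in (univ : Set (Eu N)) ×ˢ Ioi (0 : ℝ),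
        u q.1 q.2 * deriv (fun s => ζ (q.1, s)) q.2)
      + (∫ x : Eu N, u0 x * ζ (x, 0))
    = ∫ q : Eu N × ℝ in (univ : Set (Eu N)) ×ˢ Ioi (0 : ℝ),
        (u q.1 q.2 - f q.1 q.2) * Lop N σ μ (fun y => ζ (y, q.2)) q.1

/-- The multiplier `m(ξ)` of `𝓛`. -/
def symb (N : ℕ) (σ : ℝ) (μ : Measure (Sph N)) (ξ : Eu N) : ℝ :=
  ∫ θ : Sph N, (∫ r in Ioi (0 : ℝ),
    (1 - Real.cos (r * ⟪ξ, (θ : Eu N)⟫_ℝ)) * r ^ (-1 - σ)) ∂μ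

/-- `𝓛^kΦ`, the inverse Fourier transform of `m(ξ)^k e^{−m(ξ)}`; `k = 0` gives the
heat-kernel profile `Φ`. -/
def LkPhi (N : ℕ) (σ : ℝ) (μ : Measure (Sph N)) (k : ℕ) (x : Eu N) : ℝ :=
  (2 * π) ^ (-(N : ℝ)) *
    (∫ ξ : Eu N, ((symb N σ μ ξ ^ k * Real.exp (-symb N σ μ ξ) : ℝ) : ℂ) *
        Complex.exp (Complex.I * (⟪x, ξ⟫_ℝ : ℂ))).re

/-- The heat kernel `P(x,t) = t^{−N/σ} Φ(x t^{−1/σ})`. -/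
def heatK (N : ℕ) (σ : ℝ) (μ : Measure (Sph N)) (x : Eu N) (t : ℝ) : ℝ :=
  t ^ (-(N : ℝ) / σ) * LkPhi N σ μ 0 ((t ^ (-(1 : ℝ) / σ)) • x)

/-- `𝓛P(x,t) = t^{−N/σ−1} (𝓛Φ)(x t^{−1/σ})`. -/
def LheatK (N : ℕ) (σ : ℝ) (μ : Measure (Sph N)) (x : Eu N) (t : ℝ) : ℝ :=
  t ^ (-(N : ℝ) / σ - 1) * LkPhi N σ μ 1 ((t ^ (-(1 : ℝ) / σ)) • x)

/-- The σ-parabolic norm `|(x,t)|_σ = (|x|² + |t|^{2/σ})^{1/2}`. -/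
def pnorm (N : ℕ) (σ : ℝ) (x : Eu N) (t : ℝ) : ℝ := Real.sqrt (‖x‖ ^ 2 + |t| ^ (2 / σ))

/-- `f ∈ C^α_σ(Q)` with Hölder constant `c`. -/
def HolderSigma (N : ℕ) (σ α c : ℝ) (f : Eu N → ℝ → ℝ) : Prop :=
  ∀ x t x' t', 0 < t → 0 < t' → |f x t - f x' t'| ≤ c * pnorm N σ (x - x') (t - t') ^ α


/-- The bilinear form `E(v,w)`. -/
def Ebil (N : ℕ) (σ : ℝ) (μ : Measure (Sph N)) (v w : Eu N → ℝ) (x : Eu N) : ℝ :=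
  (1 / 2) * ∫ θ : Sph N, (∫ r in Ioi (0 : ℝ),
    ((v (x + r • (θ : Eu N)) - v x) * (w (x + r • (θ : Eu N)) - w x) +
      (v x - v (x - r • (θ : Eu N))) * (w x - w (x - r • (θ : Eu N)))) * r ^ (-1 - σ)) ∂μ


section Helpers

variable {N : ℕ}

lemma lip_bound' {g : Eu N → ℝ} (hg : ContDiff ℝ 2 g) {C : ℝ}
    (h1 : ∀ y, ‖fderiv ℝ g y‖ ≤ C) (a b : Eu N) : |g a - g b| ≤ C * ‖a - b‖ := by
  have := convex_univ.norm_image_sub_le_of_norm_fderiv_le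
    (fun y _ => (hg.differentiable (by norm_num)).differentiableAt)
    (fun y _ => h1 y) (mem_univ b) (mem_univ a)
  simpa [Real.norm_eq_abs] using this

lemma secondDiff_bound {g : Eu N → ℝ} (hg : ContDiff ℝ 2 g) {C : ℝ}
    (h2 : ∀ y, ‖iteratedFDeriv ℝ 2 g y‖ ≤ C) (x h : Eu N) :
    |g x - (g (x + h) + g (x - h)) / 2| ≤ C * ‖h‖ ^ 2 := by
  set φ := fderiv ℝ g with hφ
  have hC0 : 0 ≤ C := (norm_nonneg _).trans (h2 x)
  have hgd : Differentiable ℝ g := hg.differentiable (by norm_num)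
  have hφd : Differentiable ℝ φ :=
    (hg.fderiv_right (m := 1) (by norm_num)).differentiable one_ne_zero
  have hφlip : ∀ a b : Eu N, ‖φ a - φ b‖ ≤ C * ‖a - b‖ := by
    intro a b
    refine convex_univ.norm_image_sub_le_of_norm_fderiv_le
      (fun y _ => (hφd y)) (fun y _ => ?_) (mem_univ b) (mem_univ a)
    calc ‖fderiv ℝ φ y‖ = ‖iteratedFDeriv ℝ 1 φ y‖ := by
          rw [← norm_iteratedFDeriv_fderiv, norm_iteratedFDeriv_zero]
      _ = ‖iteratedFDeriv ℝ 2 g y‖ := norm_iteratedFDeriv_fderiv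
      _ ≤ C := h2 y
  have key : ∀ h' : Eu N, ‖h'‖ ≤ ‖h‖ →
      ‖g (x + h') - g x - φ x h'‖ ≤ C * ‖h‖ * ‖h‖ := by
    intro h' hh'
    have hxh' : x + h' ∈ closedBall x ‖h‖ := by
      simpa [dist_eq_norm, mem_closedBall] using hh'
    have hb : ∀ y ∈ closedBall x ‖h‖, ‖fderiv ℝ g y - φ x‖ ≤ C * ‖h‖ := by
      intro y hy
      refine (hφlip y x).trans (mul_le_mul_of_nonneg_left ?_ hC0)
      simpa [dist_eq_norm, mem_closedBall] using hy
    have := (convex_closedBall x ‖h‖).norm_image_sub_le_of_norm_fderiv_le'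
      (fun y _ => hgd.differentiableAt) hb
      (mem_closedBall_self (norm_nonneg h)) hxh'
    calc ‖g (x + h') - g x - φ x h'‖
        = ‖g (x + h') - g x - φ x (x + h' - x)‖ := by rw [add_sub_cancel_left]
      _ ≤ C * ‖h‖ * ‖x + h' - x‖ := this
      _ ≤ C * ‖h‖ * ‖h‖ := by
          rw [add_sub_cancel_left]
          exact mul_le_mul_of_nonneg_left hh' (by positivity)
  have A := key h le_rfl
  have B := key (-h) (by simp)
  have habs : |(g (x + h) - g x - φ x h) + (g (x - h) - g x - φ x (-h))|
      ≤ C * ‖h‖ * ‖h‖ + C * ‖h‖ * ‖h‖ := by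
    refine (abs_add_le _ _).trans (add_le_add ?_ ?_)
    · simpa [Real.norm_eq_abs] using A
    · simpa [Real.norm_eq_abs, sub_eq_add_neg] using B
  have hmapneg : φ x (-h) = -φ x h := map_neg _ _
  have heq : g x - (g (x + h) + g (x - h)) / 2 =
      -(1 / 2) * ((g (x + h) - g x - φ x h) + (g (x - h) - g x - φ x (-h))) := by
    rw [hmapneg]; ring
  rw [heq, abs_mul]
  have h12 : |(-(1 / 2 : ℝ))| = 1 / 2 := by norm_num
  calc |(-(1 / 2 : ℝ))| * |(g (x + h) - g x - φ x h) + (g (x - h) - g x - φ x (-h))|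
      ≤ (1 / 2) * (C * ‖h‖ * ‖h‖ + C * ‖h‖ * ‖h‖) := by
        rw [h12]; exact mul_le_mul_of_nonneg_left habs (by norm_num)
    _ = C * ‖h‖ ^ 2 := by ring

lemma dom_int {σ : ℝ} (hσ0 : 0 < σ) (hσ2 : σ < 2) :
    IntegrableOn (fun r : ℝ => min 1 (r ^ 2) * r ^ (-1 - σ)) (Ioi 0) volume := by
  have hmeas : Measurable (fun r : ℝ => min 1 (r ^ 2) * r ^ (-1 - σ)) :=
    (measurable_const.min (measurable_id.pow_const 2)).mul (measurable_id.pow_const _)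
  have h1 : IntegrableOn (fun r : ℝ => min 1 (r ^ 2) * r ^ (-1 - σ)) (Ioc 0 1) volume := by
    have hint : IntegrableOn (fun r : ℝ => r ^ (1 - σ)) (Ioc 0 1) volume := by
      have := intervalIntegral.intervalIntegrable_rpow' (a := 0) (b := 1)
        (r := 1 - σ) (by linarith)
      rwa [intervalIntegrable_iff_integrableOn_Ioc_of_le (by norm_num)] at this
    refine hint.integrable.mono' hmeas.aestronglyMeasurable ?_
    filter_upwards [ae_restrict_mem measurableSet_Ioc] with r hr
    have hr0 : 0 < r := hr.1
    have hr1 : r ≤ 1 := hr.2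
    have hmin : min 1 (r ^ 2) = r ^ 2 := min_eq_right (by nlinarith)
    rw [Real.norm_eq_abs, abs_mul, hmin, abs_of_nonneg (by positivity),
      abs_of_nonneg (Real.rpow_nonneg hr0.le _)]
    have : r ^ 2 * r ^ (-1 - σ) = r ^ (1 - σ) := by
      rw [← Real.rpow_natCast r 2, ← Real.rpow_add hr0]
      norm_num
      ring_nf
    rw [this]
  have h2 : IntegrableOn (fun r : ℝ => min 1 (r ^ 2) * r ^ (-1 - σ)) (Ioi 1) volume := by
    have hint : IntegrableOn (fun r : ℝ => r ^ (-1 - σ)) (Ioi 1) volume :=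
      integrableOn_Ioi_rpow_of_lt (by linarith) one_pos
    refine hint.integrable.mono' hmeas.aestronglyMeasurable ?_
    filter_upwards [ae_restrict_mem measurableSet_Ioi] with r hr
    have hr0 : (0:ℝ) < r := lt_trans one_pos hr
    rw [Real.norm_eq_abs, abs_mul, abs_of_nonneg (le_min zero_le_one (by positivity)),
      abs_of_nonneg (Real.rpow_nonneg hr0.le _)]
    calc min 1 (r ^ 2) * r ^ (-1 - σ) ≤ 1 * r ^ (-1 - σ) :=
          mul_le_mul_of_nonneg_right (min_le_left _ _) (Real.rpow_nonneg hr0.le _)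
      _ = r ^ (-1 - σ) := one_mul _
  have hU : Ioc (0:ℝ) 1 ∪ Ioi 1 = Ioi 0 := Ioc_union_Ioi_eq_Ioi zero_le_one
  rw [← hU]
  exact h1.union h2

lemma int_prod_of_bound {σ : ℝ} (hσ0 : 0 < σ) (hσ2 : σ < 2)
    (μ : Measure (Sph N)) [IsFiniteMeasure μ] {f : Sph N × ℝ → ℝ}
    (hm : AEStronglyMeasurable f (μ.prod (volume.restrict (Ioi 0))))
    {C : ℝ} (hb : ∀ (θ : Sph N) (r : ℝ), 0 < r →
      |f (θ, r)| ≤ C * (min 1 (r ^ 2) * r ^ (-1 - σ))) :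
    Integrable f (μ.prod (volume.restrict (Ioi 0))) := by
  have hdom : Integrable (fun q : Sph N × ℝ =>
      (fun _ : Sph N => C) q.1 * (min 1 (q.2 ^ 2) * q.2 ^ (-1 - σ)))
      (μ.prod (volume.restrict (Ioi 0))) :=
    Integrable.mul_prod (integrable_const C) (dom_int hσ0 hσ2)
  refine hdom.mono' hm ?_
  have hrw : μ.prod (volume.restrict (Ioi (0:ℝ)))
      = (μ.prod volume).restrict ((univ : Set (Sph N)) ×ˢ Ioi (0:ℝ)) := by
    rw [← Measure.prod_restrict, Measure.restrict_univ]
  rw [hrw]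
  filter_upwards [ae_restrict_mem (MeasurableSet.univ.prod measurableSet_Ioi)] with q hq
  exact hb q.1 q.2 hq.2

lemma norm_sph_smul (θ : Sph N) (r : ℝ) (hr : 0 ≤ r) : ‖r • (θ : Eu N)‖ = r := by
  rw [norm_smul, mem_sphere_zero_iff_norm.mp θ.2, Real.norm_eq_abs, abs_of_nonneg hr, mul_one]

lemma intF {σ : ℝ} (hσ0 : 0 < σ) (hσ2 : σ < 2)
    (μ : Measure (Sph N)) [IsFiniteMeasure μ] {g : Eu N → ℝ} (hg : ContDiff ℝ 2 g) {C : ℝ}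
    (hC : ∀ y, |g y| ≤ C ∧ ‖fderiv ℝ g y‖ ≤ C ∧ ‖iteratedFDeriv ℝ 2 g y‖ ≤ C) (x : Eu N) :
    Integrable (fun q : Sph N × ℝ =>
        (g x - (g (x + q.2 • (q.1 : Eu N)) + g (x - q.2 • (q.1 : Eu N))) / 2) *
          q.2 ^ (-1 - σ))
      (μ.prod (volume.restrict (Ioi (0 : ℝ)))) := by
  have hC0 : 0 ≤ C := (abs_nonneg _).trans (hC x).1
  have hgc : Continuous g := hg.continuous
  have hcont : Continuous fun q : Sph N × ℝ =>
      g x - (g (x + q.2 • (q.1 : Eu N)) + g (x - q.2 • (q.1 : Eu N))) / 2 := by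
    have h1 : Continuous fun q : Sph N × ℝ => x + q.2 • (q.1 : Eu N) :=
      continuous_const.add (continuous_snd.smul (continuous_subtype_val.comp continuous_fst))
    have h2 : Continuous fun q : Sph N × ℝ => x - q.2 • (q.1 : Eu N) :=
      continuous_const.sub (continuous_snd.smul (continuous_subtype_val.comp continuous_fst))
    exact continuous_const.sub (((hgc.comp h1).add (hgc.comp h2)).div_const 2)
  refine int_prod_of_bound hσ0 hσ2 μ
    ((hcont.measurable.mul (measurable_snd.pow_const _)).aestronglyMeasurable)
    (C := 2 * C) (fun θ r hr => ?_)
  have hρ : (0:ℝ) ≤ r ^ (-1 - σ) := Real.rpow_nonneg hr.le _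
  rw [abs_mul, abs_of_nonneg hρ]
  have hpart : |g x - (g (x + r • (θ : Eu N)) + g (x - r • (θ : Eu N))) / 2|
      ≤ 2 * C * min 1 (r ^ 2) := by
    rcases le_total (r ^ 2) 1 with h | h
    · have hb2 := secondDiff_bound hg (fun y => (hC y).2.2) x (r • (θ : Eu N))
      rw [norm_sph_smul θ r hr.le] at hb2
      rw [min_eq_right h]
      nlinarith [sq_nonneg r]
    · rw [min_eq_left h, mul_one]
      calc |g x - (g (x + r • (θ : Eu N)) + g (x - r • (θ : Eu N))) / 2|
          ≤ |g x| + |(g (x + r • (θ : Eu N)) + g (x - r • (θ : Eu N))) / 2| := abs_sub _ _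
        _ ≤ C + (|g (x + r • (θ : Eu N))| + |g (x - r • (θ : Eu N))|) / 2 := by
            refine add_le_add (hC x).1 ?_
            rw [abs_div, abs_of_nonneg (by norm_num : (0:ℝ) ≤ 2)]
            exact div_le_div_of_nonneg_right (abs_add_le _ _) (by norm_num : (0:ℝ) ≤ 2) |>.trans
              (le_of_eq rfl)
        _ ≤ C + (C + C) / 2 := by
            refine add_le_add le_rfl (div_le_div_of_nonneg_right
              (add_le_add (hC _).1 (hC _).1) (by norm_num : (0:ℝ) ≤ 2))
        _ = 2 * C := by ring
  calc |g x - (g (x + r • (θ : Eu N)) + g (x - r • (θ : Eu N))) / 2| * r ^ (-1 - σ)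
      ≤ (2 * C * min 1 (r ^ 2)) * r ^ (-1 - σ) := mul_le_mul_of_nonneg_right hpart hρ
    _ = 2 * C * (min 1 (r ^ 2) * r ^ (-1 - σ)) := by ring

lemma intB {σ : ℝ} (hσ0 : 0 < σ) (hσ2 : σ < 2)
    (μ : Measure (Sph N)) [IsFiniteMeasure μ] {v w : Eu N → ℝ}
    (hv : ContDiff ℝ 2 v) (hw : ContDiff ℝ 2 w) {Cv Cw : ℝ}
    (hCv : ∀ y, |v y| ≤ Cv ∧ ‖fderiv ℝ v y‖ ≤ Cv ∧ ‖iteratedFDeriv ℝ 2 v y‖ ≤ Cv)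
    (hCw : ∀ y, |w y| ≤ Cw ∧ ‖fderiv ℝ w y‖ ≤ Cw ∧ ‖iteratedFDeriv ℝ 2 w y‖ ≤ Cw)
    (x : Eu N) :
    Integrable (fun q : Sph N × ℝ =>
        ((v (x + q.2 • (q.1 : Eu N)) - v x) * (w (x + q.2 • (q.1 : Eu N)) - w x) +
          (v x - v (x - q.2 • (q.1 : Eu N))) * (w x - w (x - q.2 • (q.1 : Eu N)))) *
          q.2 ^ (-1 - σ))
      (μ.prod (volume.restrict (Ioi (0 : ℝ)))) := by
  have hCv0 : 0 ≤ Cv := (abs_nonneg _).trans (hCv x).1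
  have hCw0 : 0 ≤ Cw := (abs_nonneg _).trans (hCw x).1
  have h1 : Continuous fun q : Sph N × ℝ => x + q.2 • (q.1 : Eu N) :=
    continuous_const.add (continuous_snd.smul (continuous_subtype_val.comp continuous_fst))
  have h2 : Continuous fun q : Sph N × ℝ => x - q.2 • (q.1 : Eu N) :=
    continuous_const.sub (continuous_snd.smul (continuous_subtype_val.comp continuous_fst))
  have hcont : Continuous fun q : Sph N × ℝ =>
      (v (x + q.2 • (q.1 : Eu N)) - v x) * (w (x + q.2 • (q.1 : Eu N)) - w x) +
        (v x - v (x - q.2 • (q.1 : Eu N))) * (w x - w (x - q.2 • (q.1 : Eu N))) :=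
    (((hv.continuous.comp h1).sub continuous_const).mul
      ((hw.continuous.comp h1).sub continuous_const)).add
      ((continuous_const.sub (hv.continuous.comp h2)).mul
        (continuous_const.sub (hw.continuous.comp h2)))
  refine int_prod_of_bound hσ0 hσ2 μ
    ((hcont.measurable.mul (measurable_snd.pow_const _)).aestronglyMeasurable)
    (C := 8 * (Cv * Cw)) (fun θ r hr => ?_)
  have hρ : (0:ℝ) ≤ r ^ (-1 - σ) := Real.rpow_nonneg hr.le _
  rw [abs_mul, abs_of_nonneg hρ]
  have hterm : ∀ a b : Eu N, ‖a - b‖ = r →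
      |(v a - v b) * (w a - w b)| ≤ 4 * (Cv * Cw) * min 1 (r ^ 2) := by
    intro a b hab
    rcases le_total (r ^ 2) 1 with h | h
    · rw [min_eq_right h, abs_mul]
      have hv1 : |v a - v b| ≤ Cv * r := by
        have := lip_bound' hv (fun y => (hCv y).2.1) a b
        rwa [hab] at this
      have hw1 : |w a - w b| ≤ Cw * r := by
        have := lip_bound' hw (fun y => (hCw y).2.1) a b
        rwa [hab] at this
      nlinarith [abs_nonneg (v a - v b), abs_nonneg (w a - w b)]
    · rw [min_eq_left h, abs_mul, mul_one]
      have hv1 : |v a - v b| ≤ 2 * Cv :=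
        (abs_sub _ _).trans (by linarith [(hCv a).1, (hCv b).1])
      have hw1 : |w a - w b| ≤ 2 * Cw :=
        (abs_sub _ _).trans (by linarith [(hCw a).1, (hCw b).1])
      nlinarith [abs_nonneg (v a - v b), abs_nonneg (w a - w b)]
  have hn1 : ‖(x + r • (θ : Eu N)) - x‖ = r := by
    rw [add_sub_cancel_left, norm_sph_smul θ r hr.le]
  have hn2 : ‖x - (x - r • (θ : Eu N))‖ = r := by
    rw [sub_sub_cancel, norm_sph_smul θ r hr.le]
  have hpart := (abs_add_le _ _).trans
    (add_le_add (hterm _ _ hn1) (hterm _ _ hn2))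
  calc |(v (x + r • (θ : Eu N)) - v x) * (w (x + r • (θ : Eu N)) - w x) +
        (v x - v (x - r • (θ : Eu N))) * (w x - w (x - r • (θ : Eu N)))| * r ^ (-1 - σ)
      ≤ (4 * (Cv * Cw) * min 1 (r ^ 2) + 4 * (Cv * Cw) * min 1 (r ^ 2)) * r ^ (-1 - σ) :=
        mul_le_mul_of_nonneg_right hpart hρ
    _ = 8 * (Cv * Cw) * (min 1 (r ^ 2) * r ^ (-1 - σ)) := by ring

lemma mul_bounds {v w : Eu N → ℝ} (hv : ContDiff ℝ 2 v) (hw : ContDiff ℝ 2 w) {Cv Cw : ℝ}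
    (hCv : ∀ y, |v y| ≤ Cv ∧ ‖fderiv ℝ v y‖ ≤ Cv ∧ ‖iteratedFDeriv ℝ 2 v y‖ ≤ Cv)
    (hCw : ∀ y, |w y| ≤ Cw ∧ ‖fderiv ℝ w y‖ ≤ Cw ∧ ‖iteratedFDeriv ℝ 2 w y‖ ≤ Cw) :
    ∀ y, |(fun y => v y * w y) y| ≤ 4 * (Cv * Cw) ∧
      ‖fderiv ℝ (fun y => v y * w y) y‖ ≤ 4 * (Cv * Cw) ∧
      ‖iteratedFDeriv ℝ 2 (fun y => v y * w y) y‖ ≤ 4 * (Cv * Cw) := by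
  have hCv0 : 0 ≤ Cv := (abs_nonneg _).trans (hCv 0).1
  have hCw0 : 0 ≤ Cw := (abs_nonneg _).trans (hCw 0).1
  have hvit : ∀ (i : ℕ), i ≤ 2 → ∀ y, ‖iteratedFDeriv ℝ i v y‖ ≤ Cv := by
    intro i hi y
    interval_cases i
    · rw [norm_iteratedFDeriv_zero]; exact (Real.norm_eq_abs (v y)) ▸ (hCv y).1
    · calc ‖iteratedFDeriv ℝ 1 v y‖ = ‖fderiv ℝ v y‖ := by
            rw [← norm_iteratedFDeriv_fderiv, norm_iteratedFDeriv_zero]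
        _ ≤ Cv := (hCv y).2.1
    · exact (hCv y).2.2
  have hwit : ∀ (i : ℕ), i ≤ 2 → ∀ y, ‖iteratedFDeriv ℝ i w y‖ ≤ Cw := by
    intro i hi y
    interval_cases i
    · rw [norm_iteratedFDeriv_zero]; exact (Real.norm_eq_abs (w y)) ▸ (hCw y).1
    · calc ‖iteratedFDeriv ℝ 1 w y‖ = ‖fderiv ℝ w y‖ := by
            rw [← norm_iteratedFDeriv_fderiv, norm_iteratedFDeriv_zero]
        _ ≤ Cw := (hCw y).2.1
    · exact (hCw y).2.2
  have key : ∀ (n : ℕ), n ≤ 2 → ∀ y, ‖iteratedFDeriv ℝ n (fun y => v y * w y) y‖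
      ≤ 2 ^ n * (Cv * Cw) := by
    intro n hn y
    have := norm_iteratedFDeriv_mul_le (𝕜 := ℝ) hv hw y
      (n := n) (by exact_mod_cast Nat.cast_le.mpr hn)
    refine this.trans ?_
    have : ∀ i ∈ Finset.range (n + 1),
        (n.choose i : ℝ) * ‖iteratedFDeriv ℝ i v y‖ * ‖iteratedFDeriv ℝ (n - i) w y‖
        ≤ (n.choose i : ℝ) * (Cv * Cw) := by
      intro i hi
      have hi2 : i ≤ 2 := le_trans (Nat.lt_succ_iff.mp (Finset.mem_range.mp hi)) hn
      have hni2 : n - i ≤ 2 := le_trans (Nat.sub_le _ _) hn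
      have := mul_le_mul (hvit i hi2 y) (hwit (n - i) hni2 y)
        (norm_nonneg _) hCv0
      calc (n.choose i : ℝ) * ‖iteratedFDeriv ℝ i v y‖ * ‖iteratedFDeriv ℝ (n - i) w y‖
          = (n.choose i : ℝ) * (‖iteratedFDeriv ℝ i v y‖ * ‖iteratedFDeriv ℝ (n - i) w y‖) := by
            ring
        _ ≤ (n.choose i : ℝ) * (Cv * Cw) := by
            exact mul_le_mul_of_nonneg_left this (by positivity)
    refine (Finset.sum_le_sum this).trans ?_
    rw [← Finset.sum_mul]
    have : (∑ i ∈ Finset.range (n + 1), (n.choose i : ℝ)) = 2 ^ n := by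
      rw [← Nat.cast_sum]
      norm_cast
      exact Nat.sum_range_choose n
    rw [this]
  intro y
  refine ⟨?_, ?_, ?_⟩
  · have h := mul_le_mul (hCv y).1 (hCw y).1 (abs_nonneg _) hCv0
    have : |v y * w y| ≤ Cv * Cw := by rw [abs_mul]; exact h
    refine this.trans ?_
    nlinarith
  · have := key 1 one_le_two y
    have h1 : ‖fderiv ℝ (fun y => v y * w y) y‖ = ‖iteratedFDeriv ℝ 1 (fun y => v y * w y) y‖ := by
      rw [← norm_iteratedFDeriv_fderiv, norm_iteratedFDeriv_zero]
    rw [h1]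
    refine this.trans ?_
    nlinarith
  · have := key 2 le_rfl y
    refine this.trans ?_
    nlinarith

end Helpers

/-- Product rule for the stable operator:
`𝓛(vw) = v 𝓛w + w 𝓛v − E(v,w)`, all integrals converging absolutely. -/
theorem stmt5 (N : ℕ) (hN : 1 ≤ N) (σ : ℝ) (hσ0 : 0 < σ) (hσ2 : σ < 2)
    (μ : Measure (Sph N)) [IsFiniteMeasure μ]
    (v w : Eu N → ℝ) (hv : ContDiff ℝ 2 v) (hw : ContDiff ℝ 2 w)
    (hvb : ∃ C, ∀ x, |v x| ≤ C ∧ ‖fderiv ℝ v x‖ ≤ C ∧ ‖iteratedFDeriv ℝ 2 v x‖ ≤ C)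
    (hwb : ∃ C, ∀ x, |w x| ≤ C ∧ ‖fderiv ℝ w x‖ ≤ C ∧ ‖iteratedFDeriv ℝ 2 w x‖ ≤ C)
    (x : Eu N) :
    (∀ g ∈ ({fun y => v y * w y, v, w} : Set (Eu N → ℝ)),
      Integrable (fun q : Sph N × ℝ =>
          (g x - (g (x + q.2 • (q.1 : Eu N)) + g (x - q.2 • (q.1 : Eu N))) / 2) *
            q.2 ^ (-1 - σ))
        (μ.prod (volume.restrict (Ioi (0 : ℝ))))) ∧
    Integrable (fun q : Sph N × ℝ =>
        ((v (x + q.2 • (q.1 : Eu N)) - v x) * (w (x + q.2 • (q.1 : Eu N)) - w x) +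
          (v x - v (x - q.2 • (q.1 : Eu N))) * (w x - w (x - q.2 • (q.1 : Eu N)))) *
          q.2 ^ (-1 - σ))
      (μ.prod (volume.restrict (Ioi (0 : ℝ)))) ∧
    Lop N σ μ (fun y => v y * w y) x =
      v x * Lop N σ μ w x + w x * Lop N σ μ v x - Ebil N σ μ v w x := by
  obtain ⟨Cv, hCv⟩ := hvb
  obtain ⟨Cw, hCw⟩ := hwb
  have hvw : ContDiff ℝ 2 (fun y => v y * w y) := hv.mul hw
  have hCvw := mul_bounds hv hw hCv hCw
  have hIv := intF hσ0 hσ2 μ hv hCv x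
  have hIw := intF hσ0 hσ2 μ hw hCw x
  have hIvw := intF hσ0 hσ2 μ hvw hCvw x
  have hIB := intB hσ0 hσ2 μ hv hw hCv hCw x
  refine ⟨?_, hIB, ?_⟩
  · intro g hg
    simp only [Set.mem_insert_iff, Set.mem_singleton_iff] at hg
    rcases hg with rfl | rfl | rfl
    exacts [hIvw, hIv, hIw]
  · set P := μ.prod (volume.restrict (Ioi (0:ℝ))) with hP
    have key : ∀ (g : Eu N → ℝ), Integrable (fun q : Sph N × ℝ =>
        (g x - (g (x + q.2 • (q.1 : Eu N)) + g (x - q.2 • (q.1 : Eu N))) / 2) *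
          q.2 ^ (-1 - σ)) P →
        Lop N σ μ g x = ∫ q : Sph N × ℝ,
          (g x - (g (x + q.2 • (q.1 : Eu N)) + g (x - q.2 • (q.1 : Eu N))) / 2) *
            q.2 ^ (-1 - σ) ∂P := by
      intro g hI
      rw [Lop]
      exact (MeasureTheory.integral_prod _ hI).symm
    have e1 : Lop N σ μ (fun y => v y * w y) x = ∫ q : Sph N × ℝ,
        (v x * w x - (v (x + q.2 • (q.1 : Eu N)) * w (x + q.2 • (q.1 : Eu N)) +
          v (x - q.2 • (q.1 : Eu N)) * w (x - q.2 • (q.1 : Eu N))) / 2) *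
          q.2 ^ (-1 - σ) ∂P := key _ hIvw
    have e2 : Lop N σ μ w x = ∫ q : Sph N × ℝ,
        (w x - (w (x + q.2 • (q.1 : Eu N)) + w (x - q.2 • (q.1 : Eu N))) / 2) *
          q.2 ^ (-1 - σ) ∂P := key _ hIw
    have e3 : Lop N σ μ v x = ∫ q : Sph N × ℝ,
        (v x - (v (x + q.2 • (q.1 : Eu N)) + v (x - q.2 • (q.1 : Eu N))) / 2) *
          q.2 ^ (-1 - σ) ∂P := key _ hIv
    have e4 : Ebil N σ μ v w x = (1 / 2) * ∫ q : Sph N × ℝ,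
        ((v (x + q.2 • (q.1 : Eu N)) - v x) * (w (x + q.2 • (q.1 : Eu N)) - w x) +
          (v x - v (x - q.2 • (q.1 : Eu N))) * (w x - w (x - q.2 • (q.1 : Eu N)))) *
          q.2 ^ (-1 - σ) ∂P := by
      rw [Ebil]
      exact congrArg (fun t => (1 / 2 : ℝ) * t) (MeasureTheory.integral_prod _ hIB).symm
    rw [e1, e2, e3, e4]
    have hpt : (fun q : Sph N × ℝ =>
        (v x * w x - (v (x + q.2 • (q.1 : Eu N)) * w (x + q.2 • (q.1 : Eu N)) +
          v (x - q.2 • (q.1 : Eu N)) * w (x - q.2 • (q.1 : Eu N))) / 2) * q.2 ^ (-1 - σ))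
        = fun q : Sph N × ℝ =>
          v x * ((w x - (w (x + q.2 • (q.1 : Eu N)) + w (x - q.2 • (q.1 : Eu N))) / 2) *
            q.2 ^ (-1 - σ)) +
          w x * ((v x - (v (x + q.2 • (q.1 : Eu N)) + v (x - q.2 • (q.1 : Eu N))) / 2) *
            q.2 ^ (-1 - σ)) -
          (1 / 2) * (((v (x + q.2 • (q.1 : Eu N)) - v x) * (w (x + q.2 • (q.1 : Eu N)) - w x) +
            (v x - v (x - q.2 • (q.1 : Eu N))) * (w x - w (x - q.2 • (q.1 : Eu N)))) *
            q.2 ^ (-1 - σ)) := by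
      funext q
      ring
    rw [hpt]
    have hS : Integrable (fun q : Sph N × ℝ =>
        v x * ((w x - (w (x + q.2 • (q.1 : Eu N)) + w (x - q.2 • (q.1 : Eu N))) / 2) *
          q.2 ^ (-1 - σ)) +
        w x * ((v x - (v (x + q.2 • (q.1 : Eu N)) + v (x - q.2 • (q.1 : Eu N))) / 2) *
          q.2 ^ (-1 - σ))) P := (hIw.const_mul (v x)).add (hIv.const_mul (w x))
    rw [integral_sub hS (hIB.const_mul (1 / 2)),
      integral_add (hIw.const_mul (v x)) (hIv.const_mul (w x)),
      integral_const_mul, integral_const_mul, integral_const_mul]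
end
end

section
/- For every σ ∈ (0,2), the integral ∫_0^∞ (1 − cos t) t^{−1−σ} dt converges and equals π^{1/2} Γ(1 − σ/2) / (2^σ σ Γ((1+σ)/2)), where Γ denotes the Gamma function. -/
open MeasureTheory Metric Real Set
open scoped InnerProductSpace ENNReal

noncomputable section

lemma stmt16_integrable (σ : ℝ) (hσ0 : 0 < σ) (hσ2 : σ < 2) :
    IntegrableOn (fun t : ℝ => (1 - Real.cos t) * t ^ (-1 - σ)) (Ioi (0:ℝ)) volume := by
  have hc : ContinuousOn (fun t : ℝ => (1 - Real.cos t) * t ^ (-1 - σ)) (Ioi (0:ℝ)) :=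
    ((continuous_const.sub Real.continuous_cos).continuousOn).mul
      (ContinuousOn.rpow_const continuousOn_id fun x hx => Or.inl (ne_of_gt hx))
  rw [← Ioc_union_Ioi_eq_Ioi (zero_le_one (α := ℝ)), integrableOn_union]
  constructor
  · have hg : IntegrableOn (fun t : ℝ => t ^ (1 - σ)) (Ioc (0:ℝ) 1) volume := by
      have := intervalIntegral.intervalIntegrable_rpow' (r := 1 - σ) (by linarith) (a := 0) (b := 1)
      rwa [intervalIntegrable_iff_integrableOn_Ioc_of_le zero_le_one] at this
    refine hg.mono' ((hc.mono Ioc_subset_Ioi_self).aestronglyMeasurable measurableSet_Ioc) ?_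
    filter_upwards [ae_restrict_mem measurableSet_Ioc] with t ht
    have ht0 : 0 < t := ht.1
    have h1 : 0 ≤ 1 - Real.cos t := by nlinarith [Real.cos_le_one t]
    have h2 : 1 - Real.cos t ≤ t ^ 2 := by nlinarith [Real.one_sub_sq_div_two_le_cos (x := t)]
    rw [Real.norm_eq_abs, abs_of_nonneg (mul_nonneg h1 (Real.rpow_nonneg ht0.le _))]
    calc (1 - Real.cos t) * t ^ (-1 - σ)
        ≤ t ^ (2:ℕ) * t ^ (-1 - σ) :=
          mul_le_mul_of_nonneg_right h2 (Real.rpow_nonneg ht0.le _)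
      _ = t ^ (1 - σ) := by
          rw [← Real.rpow_natCast t 2, ← Real.rpow_add ht0]
          congr 1; push_cast; ring
  · have hg : IntegrableOn (fun t : ℝ => 2 * t ^ (-1 - σ)) (Ioi (1:ℝ)) volume :=
      (integrableOn_Ioi_rpow_of_lt (by linarith) one_pos).const_mul 2
    refine hg.mono' ((hc.mono (Ioi_subset_Ioi zero_le_one)).aestronglyMeasurable measurableSet_Ioi) ?_
    filter_upwards [ae_restrict_mem measurableSet_Ioi] with t ht
    have ht0 : (0:ℝ) < t := lt_trans one_pos ht
    have h1 : 0 ≤ 1 - Real.cos t := by nlinarith [Real.cos_le_one t]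
    have h2 : 1 - Real.cos t ≤ 2 := by nlinarith [Real.neg_one_le_cos t]
    rw [Real.norm_eq_abs, abs_of_nonneg (mul_nonneg h1 (Real.rpow_nonneg ht0.le _))]
    exact mul_le_mul_of_nonneg_right h2 (Real.rpow_nonneg ht0.le _)

lemma gauss_cos_real (s : ℝ) (hs : 0 < s) :
    ∫ x : ℝ, Real.cos x * Real.exp (-s * x ^ 2)
      = Real.sqrt (π / s) * Real.exp (-(1 / (4 * s))) := by
  have hb : (0:ℝ) < ((s:ℂ)).re := by simpa using hs
  have h := fourierIntegral_gaussian hb 1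
  have hint : Integrable (fun x : ℝ =>
      Complex.exp (Complex.I * 1 * x) * Complex.exp (-(s:ℂ) * x ^ 2)) := by
    have h0 := integrable_cexp_quadratic hb Complex.I 0
    apply h0.congr
    filter_upwards with x
    rw [← Complex.exp_add]
    ring_nf
  have hre := congrArg Complex.re h
  have hI := integral_re hint
  simp only [RCLike.re_eq_complex_re] at hI
  rw [← hI] at hre
  have hpt : ∀ x : ℝ, (Complex.exp (Complex.I * 1 * x) * Complex.exp (-(s:ℂ) * x ^ 2)).re
      = Real.cos x * Real.exp (-s * x ^ 2) := by
    intro x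
    have h1 : Complex.exp (-(s:ℂ) * x ^ 2) = ((Real.exp (-s * x ^ 2) : ℝ) : ℂ) := by
      rw [Complex.ofReal_exp]; push_cast; ring_nf
    rw [h1, mul_comm, Complex.re_ofReal_mul,
      show Complex.I * 1 * x = (x:ℂ) * Complex.I by ring, Complex.exp_ofReal_mul_I_re]
    ring
  simp_rw [hpt] at hre
  rw [hre]
  have h2 : ((π : ℂ) / s) ^ (1/2 : ℂ) * Complex.exp (-(1:ℂ) ^ 2 / (4 * s))
      = ((Real.sqrt (π / s) * Real.exp (-(1 / (4 * s))) : ℝ) : ℂ) := by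
    rw [show ((π:ℂ) / s) = ((π / s : ℝ) : ℂ) by push_cast; ring,
      show (1/2 : ℂ) = ((1/2 : ℝ) : ℂ) by norm_num,
      ← Complex.ofReal_cpow (by positivity),
      show -(1:ℂ) ^ 2 / (4 * (s:ℂ)) = ((-(1 / (4 * s)) : ℝ) : ℂ) by push_cast; ring,
      ← Complex.ofReal_exp, ← Complex.ofReal_mul, Real.rpow_def_of_pos (by positivity),
      Real.sqrt_eq_rpow, Real.rpow_def_of_pos (by positivity)]
  rw [h2, Complex.ofReal_re]

lemma gauss_cos_Ioi (s : ℝ) (hs : 0 < s) :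
    ∫ x in Ioi (0:ℝ), Real.cos x * Real.exp (-s * x ^ 2)
      = Real.sqrt (π / s) * Real.exp (-(1 / (4 * s))) / 2 := by
  have h := integral_comp_abs (f := fun x : ℝ => Real.cos x * Real.exp (-s * x ^ 2))
  have h2 : (∫ x : ℝ, Real.cos |x| * Real.exp (-s * |x| ^ 2))
      = ∫ x : ℝ, Real.cos x * Real.exp (-s * x ^ 2) := by
    congr 1; funext x; rw [Real.cos_abs, sq_abs]
  rw [h2, gauss_cos_real s hs] at h
  linarith

lemma stmt16_inner_t (s : ℝ) (hs : 0 < s) :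
    ∫ t in Ioi (0:ℝ), (1 - Real.cos t) * Real.exp (-(t ^ 2 * s))
      = Real.sqrt (π / s) / 2 * (1 - Real.exp (-(1 / (4 * s)))) := by
  have h1 : IntegrableOn (fun t : ℝ => Real.exp (-s * t ^ 2)) (Ioi 0) volume :=
    (integrable_exp_neg_mul_sq hs).integrableOn
  have h2 : IntegrableOn (fun t : ℝ => Real.cos t * Real.exp (-s * t ^ 2)) (Ioi 0) volume := by
    refine h1.mono' ((Real.continuous_cos.mul (by continuity)).aestronglyMeasurable) ?_
    filter_upwards with t
    rw [Real.norm_eq_abs, abs_mul, abs_of_nonneg (Real.exp_nonneg _)]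
    have := abs_cos_le_one t
    nlinarith [Real.exp_nonneg (-s * t ^ 2), abs_nonneg (Real.cos t)]
  have key : EqOn (fun t : ℝ => (1 - Real.cos t) * Real.exp (-(t ^ 2 * s)))
      (fun t => Real.exp (-s * t ^ 2) - Real.cos t * Real.exp (-s * t ^ 2)) (Ioi 0) := by
    intro t _
    simp only
    rw [show -(t ^ 2 * s) = -s * t ^ 2 by ring]
    ring
  rw [setIntegral_congr_fun measurableSet_Ioi key, integral_sub h1 h2,
    integral_gaussian_Ioi, gauss_cos_Ioi s hs]
  ring

lemma stmt16_inner_s (σ : ℝ) (hσ0 : 0 < σ) (t : ℝ) (ht : 0 < t) :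
    ∫ s in Ioi (0:ℝ), s ^ ((1 + σ) / 2 - 1) * Real.exp (-(t ^ 2 * s))
      = t ^ (-1 - σ) * Real.Gamma ((1 + σ) / 2) := by
  rw [Real.integral_rpow_mul_exp_neg_mul_Ioi (by linarith) (by positivity)]
  congr 1
  have h2 : (1 / t ^ 2 : ℝ) = t ^ (-2 : ℝ) := by
    rw [Real.rpow_neg ht.le, one_div]
    congr 1
    rw [← Real.rpow_natCast t 2]; norm_num
  rw [h2, ← Real.rpow_mul ht.le]
  congr 1
  ring

open Filter in
lemma stmt16_K (σ : ℝ) (hσ0 : 0 < σ) (hσ2 : σ < 2) :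
    ∫ u in Ioi (0:ℝ), (1 - Real.exp (-u)) * u ^ (-σ / 2 - 1)
      = 2 / σ * Real.Gamma (1 - σ / 2) := by
  have hσ : σ ≠ 0 := ne_of_gt hσ0
  have hΓpos : (0:ℝ) < 1 - σ / 2 := by linarith
  have hU : ∀ x ∈ Ioi (0:ℝ), HasDerivAt (fun y => 1 - Real.exp (-y)) (Real.exp (-x)) x := by
    intro x _
    have h := (Real.hasDerivAt_exp (-x)).comp x (hasDerivAt_neg x)
    simpa using h.const_sub 1
  have hV : ∀ x ∈ Ioi (0:ℝ), HasDerivAt (fun y : ℝ => -2 / σ * y ^ (-σ / 2))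
      (x ^ (-σ / 2 - 1)) x := by
    intro x hx
    have h := (Real.hasDerivAt_rpow_const (x := x) (p := -σ / 2)
      (Or.inl (ne_of_gt hx))).const_mul (-2 / σ)
    convert h using 1
    · rfl
    · rfl
    field_simp
  have huv' : IntegrableOn (fun x : ℝ => (1 - Real.exp (-x)) * x ^ (-σ / 2 - 1)) (Ioi 0) volume := by
    have hc : ContinuousOn (fun x : ℝ => (1 - Real.exp (-x)) * x ^ (-σ / 2 - 1)) (Ioi (0:ℝ)) :=
      ((continuous_const.sub (Real.continuous_exp.comp continuous_neg)).continuousOn).mul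
        (ContinuousOn.rpow_const continuousOn_id fun x hx => Or.inl (ne_of_gt hx))
    rw [← Ioc_union_Ioi_eq_Ioi (zero_le_one (α := ℝ)), integrableOn_union]
    constructor
    · have hg : IntegrableOn (fun x : ℝ => x ^ (-σ / 2)) (Ioc (0:ℝ) 1) volume := by
        have := intervalIntegral.intervalIntegrable_rpow' (r := -σ / 2) (by linarith) (a := 0) (b := 1)
        rwa [intervalIntegrable_iff_integrableOn_Ioc_of_le zero_le_one] at this
      refine hg.mono' ((hc.mono Ioc_subset_Ioi_self).aestronglyMeasurable measurableSet_Ioc) ?_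
      filter_upwards [ae_restrict_mem measurableSet_Ioc] with x hx
      have hx0 : 0 < x := hx.1
      have h1 : 0 ≤ 1 - Real.exp (-x) := by
        have : Real.exp (-x) ≤ 1 := Real.exp_le_one_iff.mpr (by linarith)
        linarith
      have h2 : 1 - Real.exp (-x) ≤ x := by
        have := Real.add_one_le_exp (-x); linarith
      rw [Real.norm_eq_abs, abs_of_nonneg (mul_nonneg h1 (Real.rpow_nonneg hx0.le _))]
      calc (1 - Real.exp (-x)) * x ^ (-σ / 2 - 1)
          ≤ x * x ^ (-σ / 2 - 1) :=
            mul_le_mul_of_nonneg_right h2 (Real.rpow_nonneg hx0.le _)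
        _ = x ^ (-σ / 2) := by
            nth_rewrite 1 [← Real.rpow_one x]
            rw [← Real.rpow_add hx0]
            congr 1; ring
    · have hg : IntegrableOn (fun x : ℝ => x ^ (-σ / 2 - 1)) (Ioi (1:ℝ)) volume :=
        integrableOn_Ioi_rpow_of_lt (by linarith) one_pos
      refine hg.mono' ((hc.mono (Ioi_subset_Ioi zero_le_one)).aestronglyMeasurable
        measurableSet_Ioi) ?_
      filter_upwards [ae_restrict_mem measurableSet_Ioi] with x hx
      have hx0 : (0:ℝ) < x := lt_trans one_pos hx
      have h1 : 0 ≤ 1 - Real.exp (-x) := by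
        have : Real.exp (-x) ≤ 1 := Real.exp_le_one_iff.mpr (by linarith)
        linarith
      have h2 : 1 - Real.exp (-x) ≤ 1 := by
        have := Real.exp_nonneg (-x); linarith
      rw [Real.norm_eq_abs, abs_of_nonneg (mul_nonneg h1 (Real.rpow_nonneg hx0.le _))]
      nth_rewrite 2 [← one_mul (x ^ (-σ / 2 - 1))]
      exact mul_le_mul_of_nonneg_right h2 (Real.rpow_nonneg hx0.le _)
  have hu'v : IntegrableOn (fun x : ℝ => Real.exp (-x) * (-2 / σ * x ^ (-σ / 2))) (Ioi 0) volume := by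
    refine IntegrableOn.congr_fun
      ((Real.GammaIntegral_convergent hΓpos).const_mul (-2 / σ))
      (fun x hx => ?_) measurableSet_Ioi
    rw [show (1 - σ / 2 - 1 : ℝ) = -σ / 2 by ring]
    ring
  have habs : ∀ x : ℝ, 0 < x → ‖(1 - Real.exp (-x)) * (-2 / σ * x ^ (-σ / 2))‖
      = (1 - Real.exp (-x)) * (2 / σ * x ^ (-σ / 2)) := by
    intro x hx
    have h1 : 0 ≤ 1 - Real.exp (-x) := by
      have : Real.exp (-x) ≤ 1 := Real.exp_le_one_iff.mpr (by linarith)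
      linarith
    rw [Real.norm_eq_abs, abs_mul, abs_of_nonneg h1, abs_mul,
      abs_of_nonneg (Real.rpow_nonneg hx.le _), abs_div, abs_neg, abs_two, abs_of_pos hσ0]
  have h_zero : Tendsto (fun x : ℝ => (1 - Real.exp (-x)) * (-2 / σ * x ^ (-σ / 2)))
      (nhdsWithin 0 (Ioi 0)) (nhds 0) := by
    apply squeeze_zero_norm' (a := fun x : ℝ => 2 / σ * x ^ (1 - σ / 2))
    · filter_upwards [self_mem_nhdsWithin] with x (hx : 0 < x)
      have h2 : 1 - Real.exp (-x) ≤ x := by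
        have := Real.add_one_le_exp (-x); linarith
      rw [habs x hx]
      calc (1 - Real.exp (-x)) * (2 / σ * x ^ (-σ / 2))
          ≤ x * (2 / σ * x ^ (-σ / 2)) :=
            mul_le_mul_of_nonneg_right h2
              (mul_nonneg (by positivity) (Real.rpow_nonneg hx.le _))
        _ = 2 / σ * x ^ (1 - σ / 2) := by
            nth_rewrite 1 [← Real.rpow_one x]
            rw [show x ^ (1:ℝ) * (2 / σ * x ^ (-σ / 2))
                = 2 / σ * (x ^ (1:ℝ) * x ^ (-σ / 2)) by ring, ← Real.rpow_add hx]
            congr 2; ring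
    · have hcont : Tendsto (fun x : ℝ => x ^ (1 - σ / 2)) (nhdsWithin 0 (Ioi 0)) (nhds 0) := by
        have h := (Real.continuousAt_rpow_const 0 (1 - σ / 2) (Or.inr (by linarith))).tendsto
        rw [Real.zero_rpow (by linarith : (1:ℝ) - σ / 2 ≠ 0)] at h
        exact h.mono_left nhdsWithin_le_nhds
      have := hcont.const_mul (2 / σ)
      simpa using this
  have h_infty : Tendsto (fun x : ℝ => (1 - Real.exp (-x)) * (-2 / σ * x ^ (-σ / 2)))
      atTop (nhds 0) := by
    apply squeeze_zero_norm' (a := fun x : ℝ => 2 / σ * x ^ (-(σ / 2)))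
    · filter_upwards [eventually_gt_atTop (0:ℝ)] with x hx
      have h2 : 1 - Real.exp (-x) ≤ 1 := by
        have := Real.exp_nonneg (-x); linarith
      rw [habs x hx]
      calc (1 - Real.exp (-x)) * (2 / σ * x ^ (-σ / 2))
          ≤ 1 * (2 / σ * x ^ (-σ / 2)) :=
            mul_le_mul_of_nonneg_right h2
              (mul_nonneg (by positivity) (Real.rpow_nonneg hx.le _))
        _ = 2 / σ * x ^ (-(σ / 2)) := by
            rw [one_mul]; congr 2; ring
    · have := (tendsto_rpow_neg_atTop (by linarith : (0:ℝ) < σ / 2)).const_mul (2 / σ)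
      simpa using this
  have hres := integral_Ioi_mul_deriv_eq_deriv_mul hU hV huv' hu'v h_zero h_infty
  have hG : ∫ x in Ioi (0:ℝ), Real.exp (-x) * (-2 / σ * x ^ (-σ / 2))
      = -2 / σ * Real.Gamma (1 - σ / 2) := by
    rw [Real.Gamma_eq_integral hΓpos, ← integral_const_mul]
    apply setIntegral_congr_fun measurableSet_Ioi
    intro x hx
    rw [show (1 - σ / 2 - 1 : ℝ) = -σ / 2 by ring]
    ring
  rw [hres, hG]
  ring

lemma stmt16_subst (σ : ℝ) (hσ0 : 0 < σ) (hσ2 : σ < 2) :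
    ∫ s in Ioi (0:ℝ), s ^ (σ / 2 - 1) * (1 - Real.exp (-(1 / (4 * s))))
      = (2:ℝ) ^ (-σ) * (2 / σ) * Real.Gamma (1 - σ / 2) := by
  -- step 1 : inversion s = x⁻¹
  have hinv := integral_comp_rpow_Ioi
    (fun s : ℝ => s ^ (σ / 2 - 1) * (1 - Real.exp (-(1 / (4 * s)))))
    (p := -1) (by norm_num)
  rw [← hinv]
  -- now the integrand simplifies
  have hstep1 : ∀ x ∈ Ioi (0:ℝ),
      (|(-1:ℝ)| * x ^ ((-1:ℝ) - 1)) •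
        ((x ^ (-1:ℝ)) ^ (σ / 2 - 1) * (1 - Real.exp (-(1 / (4 * x ^ (-1:ℝ))))))
      = (1 - Real.exp (-(x / 4))) * x ^ (-σ / 2 - 1) := by
    intro x hx
    have hx0 : (0:ℝ) < x := hx
    rw [Real.rpow_neg_one, smul_eq_mul, abs_neg, abs_one, one_mul,
      Real.inv_rpow hx0.le,  ← Real.rpow_neg hx0.le,
      show (1 : ℝ) / (4 * x⁻¹) = x / 4 by field_simp,
      show ((-1:ℝ) - 1) = (-2 : ℝ) by norm_num]
    rw [show x ^ (-2:ℝ) * (x ^ (-(σ / 2 - 1)) * (1 - Real.exp (-(x / 4))))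
        = x ^ (-2:ℝ) * x ^ (-(σ / 2 - 1)) * (1 - Real.exp (-(x / 4))) by ring,
      ← Real.rpow_add hx0]
    rw [show (-2 + -(σ / 2 - 1) : ℝ) = -σ / 2 - 1 by ring]
    ring
  rw [setIntegral_congr_fun measurableSet_Ioi hstep1]
  -- step 2 : scaling x = 4 * u
  have hscale := integral_comp_mul_left_Ioi
    (fun x : ℝ => (1 - Real.exp (-(x / 4))) * x ^ (-σ / 2 - 1)) 0 (b := 4) (by norm_num)
  rw [mul_zero] at hscale
  have hstep2 : ∀ u ∈ Ioi (0:ℝ),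
      (1 - Real.exp (-(4 * u / 4))) * (4 * u) ^ (-σ / 2 - 1)
      = 4 ^ (-σ / 2 - 1) * ((1 - Real.exp (-u)) * u ^ (-σ / 2 - 1)) := by
    intro u hu
    have hu0 : (0:ℝ) < u := hu
    rw [Real.mul_rpow (by norm_num) hu0.le,
      show (4 * u / 4 : ℝ) = u by ring]
    ring
  have hscale' : (∫ x in Ioi (0:ℝ), (1 - Real.exp (-(4 * x / 4))) * (4 * x) ^ (-σ / 2 - 1))
      = 4⁻¹ * ∫ x in Ioi (0:ℝ), (1 - Real.exp (-(x / 4))) * x ^ (-σ / 2 - 1) := by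
    simpa using hscale
  rw [setIntegral_congr_fun measurableSet_Ioi hstep2, integral_const_mul,
    stmt16_K σ hσ0 hσ2] at hscale'
  have hsolve : ∫ x in Ioi (0:ℝ), (1 - Real.exp (-(x / 4))) * x ^ (-σ / 2 - 1)
      = 4 * (4 ^ (-σ / 2 - 1 : ℝ) * (2 / σ * Real.Gamma (1 - σ / 2))) := by
    linarith [hscale']
  rw [hsolve]
  have h4a : (4:ℝ) * 4 ^ (-σ / 2 - 1) = 4 ^ (-σ / 2) := by
    nth_rewrite 1 [← Real.rpow_one 4]
    rw [← Real.rpow_add (by norm_num : (0:ℝ) < 4)]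
    congr 1; ring
  have h4b : (4:ℝ) ^ (-σ / 2) = 2 ^ (-σ) := by
    rw [show (4:ℝ) = 2 ^ (2:ℝ) by
        rw [show ((2:ℝ) : ℝ) ^ (2:ℝ) = (2:ℝ) ^ ((2:ℕ):ℝ) by norm_num, Real.rpow_natCast]
        norm_num,
      ← Real.rpow_mul (by norm_num : (0:ℝ) ≤ 2)]
    congr 1; ring
  rw [← mul_assoc, h4a, h4b]
  ring

/-- `∫_0^∞ (1 − cos t) t^{−1−σ} dt = √π Γ(1−σ/2) / (2^σ σ Γ((1+σ)/2))`. -/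
theorem stmt16 (σ : ℝ) (hσ0 : 0 < σ) (hσ2 : σ < 2) :
    IntegrableOn (fun t : ℝ => (1 - Real.cos t) * t ^ (-1 - σ)) (Ioi (0 : ℝ)) volume ∧
    ∫ t in Ioi (0 : ℝ), (1 - Real.cos t) * t ^ (-1 - σ) =
      Real.pi ^ ((1 : ℝ) / 2) * Real.Gamma (1 - σ / 2) /
        (2 ^ σ * σ * Real.Gamma ((1 + σ) / 2)) := by

  have hint := stmt16_integrable σ hσ0 hσ2
  refine ⟨hint, ?_⟩
  have hs2 : (0:ℝ) < (1 + σ) / 2 := by linarith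
  have hGpos : 0 < Real.Gamma ((1 + σ) / 2) := Real.Gamma_pos_of_pos hs2
  set F : ℝ → ℝ → ℝ :=
    fun t s => (1 - Real.cos t) * (s ^ ((1 + σ) / 2 - 1) * Real.exp (-(t ^ 2 * s))) with hF
  have hFmeas : AEStronglyMeasurable (Function.uncurry F)
      ((volume.restrict (Ioi (0:ℝ))).prod (volume.restrict (Ioi (0:ℝ)))) := by
    rw [Measure.prod_restrict]
    apply ContinuousOn.aestronglyMeasurable
    · apply ContinuousOn.mul
      · exact (continuous_const.sub (Real.continuous_cos.comp continuous_fst)).continuousOn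
      · apply ContinuousOn.mul
        · exact ContinuousOn.rpow_const (continuous_snd.continuousOn)
            (fun p hp => Or.inl (ne_of_gt hp.2))
        · exact (Real.continuous_exp.comp (by continuity)).continuousOn
    · exact measurableSet_Ioi.prod measurableSet_Ioi
  have hFint : Integrable (Function.uncurry F)
      ((volume.restrict (Ioi (0:ℝ))).prod (volume.restrict (Ioi (0:ℝ)))) := by
    rw [integrable_prod_iff hFmeas]
    constructor
    · filter_upwards [ae_restrict_mem measurableSet_Ioi] with t ht
      have h := integrableOn_rpow_mul_exp_neg_mul_rpow
        (s := (1 + σ) / 2 - 1) (p := 1) (b := t ^ 2) (by linarith) one_pos (pow_pos (mem_Ioi.mp ht) 2)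
      have h2 : IntegrableOn (fun x : ℝ => x ^ ((1 + σ) / 2 - 1) * Real.exp (-(t ^ 2 * x)))
          (Ioi 0) volume := by
        refine IntegrableOn.congr_fun h (fun x hx => ?_) measurableSet_Ioi
        rw [Real.rpow_one, neg_mul]
      exact (h2.const_mul (1 - Real.cos t))
    · apply Integrable.congr (hint.mul_const (Real.Gamma ((1 + σ) / 2)))
      filter_upwards [ae_restrict_mem measurableSet_Ioi] with t ht
      have h1 : 0 ≤ 1 - Real.cos t := by nlinarith [Real.cos_le_one t]
      calc (1 - Real.cos t) * t ^ (-1 - σ) * Real.Gamma ((1 + σ) / 2)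
          = ∫ s in Ioi (0:ℝ), F t s := by
            rw [hF]
            simp only
            rw [integral_const_mul, stmt16_inner_s σ hσ0 t ht]
            ring
        _ = ∫ s in Ioi (0:ℝ), ‖F t s‖ := by
            apply setIntegral_congr_fun measurableSet_Ioi
            intro s hs
            rw [hF]
            simp only
            rw [Real.norm_eq_abs, abs_of_nonneg (mul_nonneg h1
              (mul_nonneg (Real.rpow_nonneg (le_of_lt hs) _) (Real.exp_nonneg _)))]
  have hswap := integral_integral_swap hFint
  have hL : (∫ t in Ioi (0:ℝ), ∫ s in Ioi (0:ℝ), F t s)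
      = Real.Gamma ((1 + σ) / 2) * ∫ t in Ioi (0:ℝ), (1 - Real.cos t) * t ^ (-1 - σ) := by
    rw [← integral_const_mul]
    apply setIntegral_congr_fun measurableSet_Ioi
    intro t ht
    rw [hF]
    simp only
    rw [integral_const_mul, stmt16_inner_s σ hσ0 t ht]
    ring
  have hR : (∫ s in Ioi (0:ℝ), ∫ t in Ioi (0:ℝ), F t s)
      = Real.sqrt π / 2 * ((2:ℝ) ^ (-σ) * (2 / σ) * Real.Gamma (1 - σ / 2)) := by
    rw [← stmt16_subst σ hσ0 hσ2, ← integral_const_mul]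
    apply setIntegral_congr_fun measurableSet_Ioi
    intro s hs
    have hs0 : (0:ℝ) < s := hs
    rw [hF]
    simp only
    rw [show (fun t : ℝ => (1 - Real.cos t) * (s ^ ((1 + σ) / 2 - 1) * Real.exp (-(t ^ 2 * s))))
        = fun t : ℝ => s ^ ((1 + σ) / 2 - 1) * ((1 - Real.cos t) * Real.exp (-(t ^ 2 * s)))
        from funext fun t => by ring, integral_const_mul, stmt16_inner_t s hs0]
    have hsq : Real.sqrt (π / s) = Real.sqrt π * s ^ (-(1:ℝ)/2) := by
      rw [show π / s = π * s⁻¹ by ring, Real.sqrt_mul pi_pos.le, Real.sqrt_inv,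
        Real.sqrt_eq_rpow s, ← Real.rpow_neg hs0.le]
      norm_num
    rw [hsq, show (σ / 2 - 1 : ℝ) = ((1 + σ) / 2 - 1) + (-(1:ℝ)/2) by ring,
      Real.rpow_add hs0]
    ring
  have hkey : Real.Gamma ((1 + σ) / 2) * (∫ t in Ioi (0:ℝ), (1 - Real.cos t) * t ^ (-1 - σ))
      = Real.sqrt π / 2 * ((2:ℝ) ^ (-σ) * (2 / σ) * Real.Gamma (1 - σ / 2)) := by
    rw [← hL, hswap, hR]
  have h2pos : (0:ℝ) < (2:ℝ) ^ σ := Real.rpow_pos_of_pos two_pos σ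
  have h2neg : (2:ℝ) ^ (-σ) = ((2:ℝ) ^ σ)⁻¹ := by
    rw [Real.rpow_neg (by norm_num : (0:ℝ) ≤ 2)]
  have hsqrtpi : Real.sqrt π = π ^ ((1:ℝ)/2) := Real.sqrt_eq_rpow π
  rw [eq_div_iff (by positivity)]
  rw [h2neg, hsqrtpi] at hkey
  field_simp at hkey ⊢
  nlinarith [hkey, hGpos, h2pos]
end
end
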